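/- Let α > −1 and R > 0, let p_n be the extended Krall–Laguerre polynomials, and let P_n be the associated 2×2 matrix polynomials. Then for all n ≥ 0: P_n''''(x)·x³·I + P_n'''(x)·[[(α+5)x², −x²],[−x³, (α+7)x²]] + P_n''(x)·[[(x² + x(α²+9α+15))/4, −(R+α+6)x/2],[−(R+α+9)x²/2, (x² + (α²+15α+39)x)/4]] + P_n'(x)·[[(2R+3)x/8 + α(α+3)/8, −((α+2)R+2α+3)/4],[−x((α+4)R+4(α+3))/4, (2R+5)x/8 + 3(α+1)(α+4)/8]] + P_n(x)·[[−(R+1)/8, 0],[−((α+1)R+α)/8, 0]] = ([[−(R+1)/8, 0],[0, 0]] + n·[[(2R+1)/8, 0],[0, (2R+3)/8]] + (n²/4)·I)·P_n(x). -/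
import Mathlib


open Polynomial

/-- The splitting operator `R_{N,m}`: the coefficient of `x^n` in `RNm N m p`
is the coefficient of `x^{nN+m}` in `p`. -/
noncomputable def RNm (N m : ℕ) (p : ℝ[X]) : ℝ[X] :=
  ∑ n ∈ Finset.range (p.natDegree + 1), C (p.coeff (n * N + m)) * X ^ n

/-- The `N×N` matrix polynomials associated to a sequence of scalar polynomials:
the `(i,j)` entry of `P_n` is `R_{N,j}(p_{nN+i})`. -/
noncomputable def matPoly (N : ℕ) (p : ℕ → ℝ[X]) (n : ℕ) :
    Matrix (Fin N) (Fin N) ℝ[X] :=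
  Matrix.of fun i j : Fin N => RNm N (j : ℕ) (p (n * N + (i : ℕ)))

/-- Entrywise `k`-th derivative of a `2×2` matrix of polynomials. -/
noncomputable def matDeriv (k : ℕ) (P : Matrix (Fin 2) (Fin 2) ℝ[X]) :
    Matrix (Fin 2) (Fin 2) ℝ[X] :=
  Matrix.of fun i j => derivative^[k] (P i j)

/-- Monic Laguerre polynomials: `L_{-1} = 0`, `L_0 = 1`,
`L_n(x) = (x − (2n−1+α))·L_{n−1}(x) − (n−1)(n−1+α)·L_{n−2}(x)`. -/
noncomputable def Lag (α : ℝ) : ℕ → ℝ[X]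
  | 0 => 1
  | 1 => X - C (1 + α)
  | (n + 2) => (X - C (2 * ((n : ℝ) + 2) - 1 + α)) * Lag α (n + 1)
      - C (((n : ℝ) + 1) * (((n : ℝ) + 1) + α)) * Lag α n

/-- `x_n = α + (2n² + 2(R−1)n − R)/((n−1)+R)`. -/
noncomputable def xKL (α R : ℝ) (n : ℕ) : ℝ :=
  α + (2 * (n : ℝ) ^ 2 + 2 * (R - 1) * (n : ℝ) - R) / (((n : ℝ) - 1) + R)

/-- `y_n = n(n+α)(n+1+R)/(n+R)`. -/
noncomputable def yKL (α R : ℝ) (n : ℕ) : ℝ :=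
  (n : ℝ) * ((n : ℝ) + α) * ((n : ℝ) + 1 + R) / ((n : ℝ) + R)

--AUXSTART
lemma coeff_RNm (j : ℕ) (p : ℝ[X]) (k : ℕ) : (RNm 2 j p).coeff k = p.coeff (k * 2 + j) := by
  rw [RNm, finset_sum_coeff]
  simp only [coeff_C_mul, coeff_X_pow, mul_ite, mul_one, mul_zero]
  rw [Finset.sum_ite_eq (Finset.range (p.natDegree + 1)) k (fun n => p.coeff (n * 2 + j))]
  simp only [Finset.mem_range]
  split_ifs with h
  · rfl
  · refine (coeff_eq_zero_of_natDegree_lt ?_).symm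
    omega

lemma RNm_add (j : ℕ) (u v : ℝ[X]) : RNm 2 j (u + v) = RNm 2 j u + RNm 2 j v := by
  ext k; simp [coeff_RNm]

lemma RNm_Cmul (j : ℕ) (c : ℝ) (u : ℝ[X]) : RNm 2 j (C c * u) = C c * RNm 2 j u := by
  ext k; simp [coeff_RNm]

lemma RNm0_Xmul (u : ℝ[X]) : RNm 2 0 (X * u) = X * RNm 2 1 u := by
  ext k
  rcases k with _ | k
  · simp [coeff_RNm]
  · rw [coeff_RNm, show (k+1) * 2 + 0 = (k*2+1) + 1 from by ring, coeff_X_mul,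
      coeff_X_mul, coeff_RNm]

lemma RNm1_Xmul (u : ℝ[X]) : RNm 2 1 (X * u) = RNm 2 0 u := by
  ext k
  rw [coeff_RNm, show k * 2 + 1 = (k*2+0) + 1 from by ring, coeff_X_mul, coeff_RNm]
  norm_num

lemma RNm0_deriv (u : ℝ[X]) : RNm 2 0 (derivative u) = RNm 2 1 u + C 2 * X * derivative (RNm 2 1 u) := by
  ext k
  rcases k with _ | k
  · simp [coeff_RNm, coeff_derivative]
  · rw [coeff_RNm, coeff_derivative, coeff_add, coeff_RNm, mul_assoc, coeff_C_mul,
      coeff_X_mul, coeff_derivative, coeff_RNm,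
      show (k+1) * 2 + 0 + 1 = (k+1)*2 + 1 from by ring]
    push_cast
    ring

lemma RNm1_deriv (u : ℝ[X]) : RNm 2 1 (derivative u) = C 2 * derivative (RNm 2 0 u) := by
  ext k
  rw [coeff_RNm, coeff_derivative, coeff_C_mul, coeff_derivative, coeff_RNm,
    show k * 2 + 1 + 1 = (k+1) * 2 + 0 from by ring]
  push_cast
  ring



lemma lag_rec (β : ℝ) (k : ℕ) : X * Lag β k
    = Lag β (k + 1) + C (2 * (k : ℝ) + 1 + β) * Lag β k
      + C ((k : ℝ) * ((k : ℝ) + β)) * Lag β (k - 1) := by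
  match k with
  | 0 => simp [Lag]
  | (j + 1) =>
    show _ = Lag β (j + 2) + _ + _
    rw [Lag]
    push_cast
    ring

lemma lag_shift (β : ℝ) (k : ℕ) :
    Lag β k = Lag (β + 1) k + C (k : ℝ) * Lag (β + 1) (k - 1) := by
  induction k using Nat.twoStepInduction with
  | zero => simp [Lag]
  | one => simp [Lag]; ring
  | more j ih1 ih2 =>
    rw [Lag, Lag, ih1, ih2]
    have h2 := lag_rec (β + 1) j
    push_cast at h2 ⊢
    simp only [map_add, map_sub, map_mul, map_one, map_ofNat, map_natCast] at h2 ⊢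
    linear_combination (((j:ℝ[X])) + 1) * h2

lemma lag_deriv (β : ℝ) (k : ℕ) :
    derivative (Lag β k) = C (k : ℝ) * Lag (β + 1) (k - 1) := by
  induction k using Nat.twoStepInduction with
  | zero => simp [Lag]
  | one => simp [Lag]
  | more j ih1 ih2 =>
    rw [Lag]
    simp only [derivative_sub, derivative_mul, derivative_X, derivative_C]
    rw [ih1, ih2]
    have h2 := lag_rec (β + 1) j
    have h3 := lag_shift β (j + 1)
    simp only [show j+2-1 = j+1 from rfl, show j+1-1 = j from rfl] at *
    push_cast at *
    simp only [map_add, map_sub, map_mul, map_one, map_ofNat, map_natCast] at *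
    linear_combination ((j:ℝ[X]) + 1) * h2 + h3

lemma lag_ode (β : ℝ) (k : ℕ) :
    X * derivative (derivative (Lag β k)) + C (β + 1) * derivative (Lag β k)
      + C (k : ℝ) * Lag β k = X * derivative (Lag β k) := by
  match k with
  | 0 => simp [Lag]
  | 1 => simp [Lag]; ring
  | (j + 2) =>
    rw [lag_deriv, derivative_C_mul, lag_deriv]
    have hs1 := lag_shift (β + 1) (j + 1)
    have hs2 := lag_shift β (j + 2)
    have hs3 := lag_shift (β + 1) (j + 2)
    have hr := lag_rec (β + 1 + 1) (j + 1)
    simp only [show j+2-1 = j+1 from rfl, show j+1-1 = j from rfl,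
      show j+2-1-1 = j from rfl] at *
    rw [hs2, hs3, hs1]
    push_cast at *
    simp only [map_add, map_sub, map_mul, map_one, map_ofNat, map_natCast] at *
    linear_combination (-((j:ℝ[X])+2)) * hr



lemma closed_form (α R : ℝ) (hR : 0 < R) (p : ℕ → ℝ[X])
    (hp : ∀ n : ℕ, X * p n = Lag α (n + 1) + C (xKL α R (n + 1)) * Lag α n
      + C (yKL α R n) * (if n = 0 then 0 else Lag α (n - 1))) (m : ℕ) :
    C ((m : ℝ) + R) * p m = C ((m : ℝ) + R) * Lag α m + derivative (Lag α m) := by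
  refine mul_left_cancel₀ (X_ne_zero (R := ℝ)) ?_
  rw [mul_left_comm, hp m]
  match m with
  | 0 =>
    have hx : xKL α R 1 = α + 1 := by
      unfold xKL; push_cast
      rw [show ((1:ℝ) - 1 + R) = R from by ring, show (2*(1:ℝ)^2 + 2*(R-1)*1 - R) = R from by ring,
        div_self (ne_of_gt hR)]
    rw [if_pos rfl, mul_zero, add_zero, hx,
      show Lag α 1 = X - C (1+α) from rfl, show Lag α 0 = (1:ℝ[X]) from rfl,
      derivative_one]
    push_cast
    simp only [map_add, map_sub, map_mul, map_one, map_ofNat, map_natCast, map_pow]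
    ring
  | (j + 1) =>
    have hne : ((j : ℝ) + 1 + R) ≠ 0 := by positivity
    have hmd : ∀ (N : ℝ), ((j:ℝ)+1+R) * (N / ((j:ℝ)+1+R)) = N := fun N => by
      rw [mul_comm, div_mul_cancel₀ _ hne]
    have hxc : (((j:ℝ)+1) + R) * xKL α R (j + 2)
        = (((j:ℝ)+1) + R) * α + 2 * ((j:ℝ)+2)^2 + 2*(R-1)*((j:ℝ)+2) - R := by
      unfold xKL; push_cast
      rw [show ((j:ℝ)+2-1+R : ℝ) = (j:ℝ)+1+R from by ring, mul_add, hmd]; ring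
    have hyc : (((j:ℝ)+1) + R) * yKL α R (j + 1)
        = ((j:ℝ)+1) * ((j:ℝ)+1+α) * ((j:ℝ)+2+R) := by
      unfold yKL; push_cast
      rw [hmd]; ring
    have e1 : C (((j:ℝ)+1) + R) * C (xKL α R (j + 2))
        = C ((((j:ℝ)+1) + R) * α + 2 * ((j:ℝ)+2)^2 + 2*(R-1)*((j:ℝ)+2) - R) := by
      rw [← C_mul, hxc]
    have e2 : C (((j:ℝ)+1) + R) * C (yKL α R (j + 1))
        = C (((j:ℝ)+1) * ((j:ℝ)+1+α) * ((j:ℝ)+2+R)) := by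
      rw [← C_mul, hyc]
    have hd := lag_deriv α (j+1)
    have hs2 := lag_shift α (j+2)
    have hs1 := lag_shift α (j+1)
    have hs0 := lag_shift α j
    have hra := lag_rec (α+1) (j+1)
    have hrb := lag_rec (α+1) j
    simp only [if_neg (Nat.succ_ne_zero j), show j+1-1 = j from rfl,
      show j+2-1 = j+1 from rfl, show j+1+1 = j+2 from rfl] at *
    rw [hd]
    push_cast at *
    simp only [map_add, map_sub, map_mul, map_one, map_ofNat, map_natCast, map_pow] at *
    linear_combination (Lag α (j+1)) * e1 + (Lag α j) * e2
      + ((j:ℝ[X]) + 1 + C R) * hs2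
      + ((((j:ℝ[X])+1+C R)*(C α) + 2*((j:ℝ[X])+2)^2 + 2*(C R-1)*((j:ℝ[X])+2) - C R)
          - X * ((j:ℝ[X])+1+C R)) * hs1
      + (((j:ℝ[X])+1) * ((j:ℝ[X])+1+C α) * ((j:ℝ[X])+2+C R)) * hs0
      - ((j:ℝ[X]) + 1 + C R) * hra
      - (((j:ℝ[X])+1+C R+1) * ((j:ℝ[X])+1)) * hrb

lemma key (α R : ℝ) (hR : 0 < R) (p : ℕ → ℝ[X])
    (hp : ∀ n : ℕ, X * p n = Lag α (n + 1) + C (xKL α R (n + 1)) * Lag α n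
      + C (yKL α R n) * (if n = 0 then 0 else Lag α (n - 1))) (m : ℕ) (x : ℝ) :
    (eval x (derivative (derivative (derivative (derivative (RNm 2 0 (p m)))))) * x ^ 3
      + eval x (derivative (derivative (derivative (RNm 2 0 (p m))))) * ((α + 5) * x ^ 2)
      + eval x (derivative (derivative (derivative (RNm 2 1 (p m))))) * (-(x ^ 3))
      + eval x (derivative (derivative (RNm 2 0 (p m)))) * ((x ^ 2 + (α ^ 2 + 9 * α + 15) * x) / 4)
      + eval x (derivative (derivative (RNm 2 1 (p m)))) * (-((R + α + 9) / 2 * x ^ 2))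
      + eval x (derivative (RNm 2 0 (p m))) * ((2 * R + 3) / 8 * x + α * (α + 3) / 8)
      + eval x (derivative (RNm 2 1 (p m))) * (-(((α + 4) * R + 4 * (α + 3)) / 4 * x))
      + eval x (RNm 2 0 (p m)) * (-(R + 1) / 8)
      + eval x (RNm 2 1 (p m)) * (-((α + 1) * R + α) / 8)
      = (((m:ℝ) ^ 2 + (2 * R + 1) * (m:ℝ) - 2 * (R + 1)) / 16) * eval x (RNm 2 0 (p m)))
    ∧
    (eval x (derivative (derivative (derivative (derivative (RNm 2 1 (p m)))))) * x ^ 3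
      + eval x (derivative (derivative (derivative (RNm 2 0 (p m))))) * (-(x ^ 2))
      + eval x (derivative (derivative (derivative (RNm 2 1 (p m))))) * ((α + 7) * x ^ 2)
      + eval x (derivative (derivative (RNm 2 0 (p m)))) * (-((R + α + 6) / 2 * x))
      + eval x (derivative (derivative (RNm 2 1 (p m)))) * ((x ^ 2 + (α ^ 2 + 15 * α + 39) * x) / 4)
      + eval x (derivative (RNm 2 0 (p m))) * (-(((α + 2) * R + 2 * α + 3) / 4))
      + eval x (derivative (RNm 2 1 (p m))) * ((2 * R + 5) / 8 * x + 3 * (α + 1) * (α + 4) / 8)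
      = (((m:ℝ) ^ 2 + (2 * R + 1) * (m:ℝ) - 2 * (R + 1)) / 16) * eval x (RNm 2 1 (p m))) := by
  have hne : ((m:ℝ) + R) ≠ 0 := by
    have h1 : (0:ℝ) ≤ (m:ℝ) := Nat.cast_nonneg m
    intro h; linarith
  have hode := lag_ode α m
  have hcf := closed_form α R hR p hp m
  have hF0_0 := congrArg (RNm 2 0) hode
  have hF1_0 := congrArg (RNm 2 1) hode
  simp only [RNm_add, RNm_Cmul, RNm0_Xmul, RNm1_Xmul, RNm0_deriv, RNm1_deriv,
    derivative_add, derivative_mul, derivative_C, derivative_X, mul_one, one_mul,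
    mul_zero, zero_mul, add_zero, zero_add] at hF0_0 hF1_0
  have hF0_1 := congrArg derivative hF0_0
  have hF1_1 := congrArg derivative hF1_0
  simp only [derivative_add, derivative_mul, derivative_C, derivative_X, mul_one, one_mul,
    mul_zero, zero_mul, add_zero, zero_add] at hF0_1 hF1_1
  have hF0_2 := congrArg derivative hF0_1
  have hF1_2 := congrArg derivative hF1_1
  simp only [derivative_add, derivative_mul, derivative_C, derivative_X, mul_one, one_mul,
    mul_zero, zero_mul, add_zero, zero_add] at hF0_2 hF1_2
  have hF0_3 := congrArg derivative hF0_2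
  have hF1_3 := congrArg derivative hF1_2
  simp only [derivative_add, derivative_mul, derivative_C, derivative_X, mul_one, one_mul,
    mul_zero, zero_mul, add_zero, zero_add] at hF0_3 hF1_3
  have hq00 := congrArg (RNm 2 0) hcf
  have hq10 := congrArg (RNm 2 1) hcf
  simp only [RNm_add, RNm_Cmul, RNm0_Xmul, RNm1_Xmul, RNm0_deriv, RNm1_deriv,
    derivative_add, derivative_mul, derivative_C, derivative_X, mul_one, one_mul,
    mul_zero, zero_mul, add_zero, zero_add] at hq00 hq10
  have hq01 := congrArg derivative hq00
  have hq11 := congrArg derivative hq10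
  simp only [derivative_add, derivative_mul, derivative_C, derivative_X, mul_one, one_mul,
    mul_zero, zero_mul, add_zero, zero_add] at hq01 hq11
  have hq02 := congrArg derivative hq01
  have hq12 := congrArg derivative hq11
  simp only [derivative_add, derivative_mul, derivative_C, derivative_X, mul_one, one_mul,
    mul_zero, zero_mul, add_zero, zero_add] at hq02 hq12
  have hq03 := congrArg derivative hq02
  have hq13 := congrArg derivative hq12
  simp only [derivative_add, derivative_mul, derivative_C, derivative_X, mul_one, one_mul,
    mul_zero, zero_mul, add_zero, zero_add] at hq03 hq13
  have hq04 := congrArg derivative hq03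
  have hq14 := congrArg derivative hq13
  simp only [derivative_add, derivative_mul, derivative_C, derivative_X, mul_one, one_mul,
    mul_zero, zero_mul, add_zero, zero_add] at hq04 hq14
  replace hF0_0 := congrArg (eval x) hF0_0
  replace hF1_0 := congrArg (eval x) hF1_0
  replace hF0_1 := congrArg (eval x) hF0_1
  replace hF1_1 := congrArg (eval x) hF1_1
  replace hF0_2 := congrArg (eval x) hF0_2
  replace hF1_2 := congrArg (eval x) hF1_2
  replace hF0_3 := congrArg (eval x) hF0_3
  replace hF1_3 := congrArg (eval x) hF1_3
  replace hq00 := congrArg (eval x) hq00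
  replace hq10 := congrArg (eval x) hq10
  replace hq01 := congrArg (eval x) hq01
  replace hq11 := congrArg (eval x) hq11
  replace hq02 := congrArg (eval x) hq02
  replace hq12 := congrArg (eval x) hq12
  replace hq03 := congrArg (eval x) hq03
  replace hq13 := congrArg (eval x) hq13
  replace hq04 := congrArg (eval x) hq04
  replace hq14 := congrArg (eval x) hq14
  simp only [eval_add, eval_mul, eval_pow, eval_C, eval_X, eval_ofNat, eval_one, eval_neg, eval_sub] at hF0_0 hF1_0 hF0_1 hF1_1 hF0_2 hF1_2 hF0_3 hF1_3 hq00 hq10 hq01 hq11 hq02 hq12 hq03 hq13 hq04 hq14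
  constructor
  · refine mul_left_cancel₀ hne ?_
    linear_combination x ^ 3 * hq04
      + ((α + 5) * x ^ 2) * hq03
      + (-(x ^ 3)) * hq13
      + ((x ^ 2 + (α ^ 2 + 9 * α + 15) * x) / 4) * hq02
      + (-((R + α + 9) / 2 * x ^ 2)) * hq12
      + ((2 * R + 3) / 8 * x + α * (α + 3) / 8) * hq01
      + (-(((α + 4) * R + 4 * (α + 3)) / 4 * x)) * hq11
      + ((-(R + 1) / 8) - (((m:ℝ) ^ 2 + (2 * R + 1) * (m:ℝ) - 2 * (R + 1)) / 16)) * hq00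
      + (-((α + 1) * R + α) / 8) * hq10
      + ((-1/16 : ℝ)*R + (1/16 : ℝ)*α*((m:ℝ)) + (1/16 : ℝ)*α*R) * hF1_0
      + ((-3/8 : ℝ)*x + (3/8 : ℝ)*x*((m:ℝ)) + (1/4 : ℝ)*x*R + (1/8 : ℝ)*x*α*((m:ℝ)) + (1/8 : ℝ)*x*α*R) * hF1_1
      + ((-1/4 : ℝ)*x^2 + (1/4 : ℝ)*x^2*((m:ℝ)) + (1/4 : ℝ)*x^2*R) * hF1_2
      + ((-1/16 : ℝ)*((m:ℝ)) + (-1/16 : ℝ)*((m:ℝ))^2 + (-1/16 : ℝ)*R + (-3/16 : ℝ)*R*((m:ℝ)) + (-1/8 : ℝ)*R^2) * hF0_0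
      + ((1/8 : ℝ)*α + (-1/8 : ℝ)*x*((m:ℝ)) + (-1/8 : ℝ)*x*R) * hF0_1
      + ((3/4 : ℝ)*x + (1/4 : ℝ)*x*α) * hF0_2
      + ((1/2 : ℝ)*x^2) * hF0_3
  · refine mul_left_cancel₀ hne ?_
    linear_combination x ^ 3 * hq14
      + (-(x ^ 2)) * hq03
      + ((α + 7) * x ^ 2) * hq13
      + (-((R + α + 6) / 2 * x)) * hq02
      + ((x ^ 2 + (α ^ 2 + 15 * α + 39) * x) / 4) * hq12
      + (-(((α + 2) * R + 2 * α + 3) / 4)) * hq01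
      + ((2 * R + 5) / 8 * x + 3 * (α + 1) * (α + 4) / 8) * hq11
      + (-(((m:ℝ) ^ 2 + (2 * R + 1) * (m:ℝ) - 2 * (R + 1)) / 16)) * hq10
      + ((-1/8 : ℝ)*((m:ℝ)) + (-1/16 : ℝ)*((m:ℝ))^2 + (-1/8 : ℝ)*R + (-3/16 : ℝ)*R*((m:ℝ)) + (-1/8 : ℝ)*R^2) * hF1_0
      + ((3/8 : ℝ) + (3/8 : ℝ)*α + (-1/8 : ℝ)*x*((m:ℝ)) + (-1/8 : ℝ)*x*R) * hF1_1
      + ((3/2 : ℝ)*x + (1/4 : ℝ)*x*α) * hF1_2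
      + ((1/2 : ℝ)*x^2) * hF1_3
      + ((-1/8 : ℝ) + (1/8 : ℝ)*((m:ℝ)) + (1/8 : ℝ)*α*((m:ℝ)) + (1/8 : ℝ)*α*R) * hF0_1
      + ((-1/4 : ℝ)*x + (1/4 : ℝ)*x*((m:ℝ)) + (1/4 : ℝ)*x*R) * hF0_2


theorem stmt10 (α R : ℝ) (hα : -1 < α) (hR : 0 < R)
    (p : ℕ → ℝ[X])
    (hp : ∀ n : ℕ, X * p n = Lag α (n + 1) + C (xKL α R (n + 1)) * Lag α n
      + C (yKL α R n) * (if n = 0 then 0 else Lag α (n - 1))) :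
    ∀ n : ℕ,
      matDeriv 4 (matPoly 2 p n) *
          (Matrix.of ![![X ^ 3, 0], ![0, X ^ 3]] : Matrix (Fin 2) (Fin 2) ℝ[X])
      + matDeriv 3 (matPoly 2 p n) *
          (Matrix.of ![![C (α + 5) * X ^ 2, -X ^ 2],
            ![-X ^ 3, C (α + 7) * X ^ 2]] : Matrix (Fin 2) (Fin 2) ℝ[X])
      + matDeriv 2 (matPoly 2 p n) *
          (Matrix.of ![![C (4⁻¹ : ℝ) * (X ^ 2 + C (α ^ 2 + 9 * α + 15) * X),
              -(C ((R + α + 6) / 2) * X)],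
            ![-(C ((R + α + 9) / 2) * X ^ 2),
              C (4⁻¹ : ℝ) * (X ^ 2 + C (α ^ 2 + 15 * α + 39) * X)]] :
            Matrix (Fin 2) (Fin 2) ℝ[X])
      + matDeriv 1 (matPoly 2 p n) *
          (Matrix.of ![![C ((2 * R + 3) / 8) * X + C (α * (α + 3) / 8),
              -C (((α + 2) * R + 2 * α + 3) / 4)],
            ![-(C (((α + 4) * R + 4 * (α + 3)) / 4) * X),
              C ((2 * R + 5) / 8) * X + C (3 * (α + 1) * (α + 4) / 8)]] :
            Matrix (Fin 2) (Fin 2) ℝ[X])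
      + matPoly 2 p n *
          (Matrix.of ![![C (-(R + 1) / 8), 0], ![C (-((α + 1) * R + α) / 8), 0]] :
            Matrix (Fin 2) (Fin 2) ℝ[X])
      = ((Matrix.of ![![C (-(R + 1) / 8), 0], ![0, 0]] : Matrix (Fin 2) (Fin 2) ℝ[X])
          + (n : ℝ) • (Matrix.of ![![C ((2 * R + 1) / 8), 0], ![0, C ((2 * R + 3) / 8)]] :
              Matrix (Fin 2) (Fin 2) ℝ[X])
          + ((n : ℝ) ^ 2 / 4) • (1 : Matrix (Fin 2) (Fin 2) ℝ[X]))
        * matPoly 2 p n := by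
  intro n
  have hit4 : ∀ q : ℝ[X], derivative^[4] q = derivative (derivative (derivative (derivative q))) := fun _ => rfl
  have hit3 : ∀ q : ℝ[X], derivative^[3] q = derivative (derivative (derivative q)) := fun _ => rfl
  have hit2 : ∀ q : ℝ[X], derivative^[2] q = derivative (derivative q) := fun _ => rfl
  have hit1 : ∀ q : ℝ[X], derivative^[1] q = derivative q := fun _ => rfl
  refine Matrix.ext fun i j => ?_
  fin_cases i <;> fin_cases j <;>
    simp only [matDeriv, matPoly, Matrix.add_apply, Matrix.mul_apply, Fin.sum_univ_two,
      Matrix.smul_apply, Matrix.of_apply, Matrix.cons_val', Matrix.cons_val_zero,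
      Matrix.cons_val_one, Matrix.head_cons, Matrix.head_fin_const, Matrix.empty_val',
      Matrix.cons_val_fin_one, Matrix.one_fin_two, Fin.isValue, Fin.val_zero, Fin.val_one,
      Fin.mk_zero, Fin.mk_one, add_zero, hit4, hit3, hit2, hit1, smul_eq_C_mul] <;>
    (apply Polynomial.funext; intro x;
     simp only [eval_add, eval_mul, eval_pow, eval_C, eval_X, eval_neg, eval_one, eval_zero,
       eval_ofNat];
     push_cast)
  · linear_combination (norm := (push_cast; ring1)) (key α R hR p hp (n*2) x).1
  · linear_combination (norm := (push_cast; ring1)) (key α R hR p hp (n*2) x).2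
  · linear_combination (norm := (push_cast; ring1)) (key α R hR p hp (n*2+1) x).1
  · linear_combination (norm := (push_cast; ring1)) (key α R hR p hp (n*2+1) x).2
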